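/- arXiv:2403.00575 — 5 statements merged into one kernel-verified Lean document; each statement's English description precedes it below -/
import Mathlib

section
/- Suppose the action of G on M is continuous, proper and cocompact, and let 𝔠 be a cutoff function. Then for all continuous compactly supported s₁, s₂ : M → H, one has ∫_M 𝔠(m)² ⟨Φ(s₁)(m), Φ(s₂)(m)⟩_H dμ(m) = ∫_G ⟨s₁, g·s₂⟩_{L²} dg, where in particular both integrals converge. -/
open MeasureTheory Pointwise Filter Topology Function
open scoped ComplexConjugate

/-! Write `F = ⟪s₁, Φ(s₂)⟫`. Equivariance `Φ(s)(g • m) = ρ g (Φ(s)(m))` gives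
`⟪Φ(s₁)(m), Φ(s₂)(m)⟫ = ∫_G F(g⁻¹ • m) dg`, while Fubini turns the right-hand side into `∫_M F`.
On the left-hand side, Fubini, the `G`-invariance of `μ` and Fubini again give
`∫_M c(m)² ∫_G F(g⁻¹ • m) dg dm = ∫_M F(m) ∫_G c(g • m)² dg dm`, and by unimodularity the inner
integral is the normalisation `∫_G c(g⁻¹ • m)² dg = 1`. Properness of the action makes all these
integrands compactly supported on `G × M`, which justifies every exchange of integrals. -/

section Unimodular

variable {G : Type*} [Group G] [TopologicalSpace G] [IsTopologicalGroup G]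
  [LocallyCompactSpace G] [MeasurableSpace G] [BorelSpace G]

/-- By right invariance `μ.inv` is left invariant, so it integrates `C_c` functions as `k • μ`;
testing on the inversion-invariant bump `φ + φ ∘ inv` gives `k = 1`. -/
theorem integral_comp_inv_of_hasCompactSupport (μ : Measure G) [μ.IsHaarMeasure]
    [μ.IsMulRightInvariant] {f : G → ℝ} (hf : Continuous f) (h'f : HasCompactSupport f) :
    ∫ g, f g⁻¹ ∂μ = ∫ g, f g ∂μ := by
  have hscale : ∀ f : G → ℝ, Continuous f → HasCompactSupport f →
      ∫ g, f g⁻¹ ∂μ = Measure.haarScalarFactor μ.inv μ • ∫ g, f g ∂μ := fun f hf h'f => by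
    rw [← integral_smul_nnreal_measure,
      ← Measure.integral_isMulLeftInvariant_eq_smul_of_hasCompactSupport _ _ hf h'f, Measure.inv]
    exact ((MeasurableEquiv.inv G).measurableEmbedding.integral_map f).symm
  obtain ⟨φ, hφ_supp, hφ_nonneg, hφ_one⟩ := exists_continuous_nonneg_pos (1 : G)
  set ψ : G → ℝ := fun g => φ g + φ g⁻¹
  have hψ_cont : Continuous ψ := by fun_prop
  have hψ_supp : HasCompactSupport ψ :=
    hφ_supp.add (hφ_supp.comp_homeomorph (Homeomorph.inv G))
  have hψ_pos : 0 < ∫ g, ψ g ∂μ :=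
    hψ_cont.integral_pos_of_hasCompactSupport_nonneg_nonzero (x := 1) hψ_supp
      (fun g => add_nonneg (hφ_nonneg g) (hφ_nonneg g⁻¹))
      (by simpa [ψ] using hφ_one)
  have hψ_inv : ∫ g, ψ g⁻¹ ∂μ = ∫ g, ψ g ∂μ := by simp only [ψ, inv_inv, add_comm]
  have hk : Measure.haarScalarFactor μ.inv μ = 1 := by
    rw [hscale ψ hψ_cont hψ_supp, NNReal.smul_def, smul_eq_mul] at hψ_inv
    exact_mod_cast (mul_eq_right₀ hψ_pos.ne').1 hψ_inv
  rw [hscale f hf h'f, hk, one_smul]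

end Unimodular

theorem continuous_uncurry_of_isometry {X E F : Type*} [TopologicalSpace X]
    [PseudoMetricSpace E] [PseudoMetricSpace F] {f : X → E → F} (hiso : ∀ x, Isometry (f x))
    (hf : ∀ v, Continuous fun x => f x v) : Continuous (uncurry f) := by
  refine continuous_iff_continuousAt.2 fun ⟨x₀, v₀⟩ => tendsto_iff_dist_tendsto_zero.2 ?_
  have h₁ : Tendsto (fun p : X × E => dist p.2 v₀) (𝓝 (x₀, v₀)) (𝓝 0) :=
    tendsto_iff_dist_tendsto_zero.1 continuous_snd.continuousAt
  have h₂ : Tendsto (fun p : X × E => dist (f p.1 v₀) (f x₀ v₀)) (𝓝 (x₀, v₀)) (𝓝 0) :=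
    tendsto_iff_dist_tendsto_zero.1 ((hf v₀).comp continuous_fst).continuousAt
  refine squeeze_zero (fun _ => dist_nonneg) (fun p => ?_) (by simpa using h₁.add h₂)
  calc dist (f p.1 p.2) (f x₀ v₀)
      ≤ dist (f p.1 p.2) (f p.1 v₀) + dist (f p.1 v₀) (f x₀ v₀) := dist_triangle _ _ _
    _ = dist p.2 v₀ + dist (f p.1 v₀) (f x₀ v₀) := by rw [(hiso p.1).dist_eq]

theorem integrable_integral_of_hasCompactSupport {X Y E : Type*}
    [TopologicalSpace X] [R1Space X] [MeasurableSpace X] [OpensMeasurableSpace X]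
    [TopologicalSpace Y] [MeasurableSpace Y] [OpensMeasurableSpace Y]
    [NormedAddCommGroup E] [NormedSpace ℝ E] {μ : Measure X} {ν : Measure Y}
    [IsFiniteMeasureOnCompacts μ] [IsFiniteMeasureOnCompacts ν]
    {f : X → Y → E} (hf : Continuous (uncurry f)) (h'f : HasCompactSupport (uncurry f)) :
    Integrable (fun x => ∫ y, f x y ∂ν) μ := by
  have hvanish : ∀ x y, f x y ≠ 0 → (x, y) ∈ tsupport (uncurry f) :=
    fun x y h => subset_tsupport _ h
  refine Continuous.integrable_of_hasCompactSupport ?_ ?_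
  · refine continuousOn_univ.1 (continuousOn_integral_of_compact_support
      (h'f.image continuous_snd) hf.continuousOn fun x y _ hy => ?_)
    by_contra h
    exact hy ⟨_, hvanish x y h, rfl⟩
  · refine HasCompactSupport.intro (h'f.image continuous_fst) fun x hx => ?_
    rw [← integral_zero Y E]
    refine integral_congr_ae (Eventually.of_forall fun y => ?_)
    by_contra h
    exact hx ⟨_, hvanish x y h, rfl⟩

section ProperAction

variable {G M α β E : Type*} [Group G] [TopologicalSpace G] [TopologicalSpace M] [MulAction G M]
  [ProperSMul G M] [Zero α] [Zero β] [Zero E] {u : M → α} {v : M → β}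

theorem hasCompactSupport_uncurry_of_smul_eq_zero (hu : HasCompactSupport u)
    (hv : HasCompactSupport v) {f : G → M → E} (hf : ∀ g m, u m = 0 ∨ v (g • m) = 0 → f g m = 0) :
    HasCompactSupport (uncurry f) := by
  refine HasCompactSupport.intro'
    ((ProperSMul.isProperMap_smul_pair (G := G)).isCompact_preimage (hv.prod hu))
    (((isClosed_tsupport v).prod (isClosed_tsupport u)).preimage (by fun_prop))
    fun ⟨g, m⟩ hp => hf g m ?_
  by_contra! h
  exact hp ⟨subset_tsupport _ h.2, subset_tsupport _ h.1⟩

variable [IsTopologicalGroup G]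

theorem hasCompactSupport_uncurry_of_inv_smul_eq_zero (hu : HasCompactSupport u)
    (hv : HasCompactSupport v) {f : G → M → E}
    (hf : ∀ g m, u m = 0 ∨ v (g⁻¹ • m) = 0 → f g m = 0) :
    HasCompactSupport (uncurry f) := by
  have h := hasCompactSupport_uncurry_of_smul_eq_zero hu hv (f := fun g m => f g⁻¹ m)
    fun g m h => hf g⁻¹ m (by simpa using h)
  convert h.comp_homeomorph ((Homeomorph.inv G).prodCongr (Homeomorph.refl M)) using 1
  ext ⟨g, m⟩
  simp

theorem hasCompactSupport_of_inv_smul_eq_zero (hv : HasCompactSupport v) (m : M) {f : G → E}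
    (hf : ∀ g, v (g⁻¹ • m) = 0 → f g = 0) : HasCompactSupport f := by
  refine HasCompactSupport.intro
    (ProperSMul.isCompact_setOfPred_inter_nonempty hv (isCompact_singleton (x := m)))
    fun g hg => hf g (image_eq_zero_of_notMem_tsupport fun hm => hg ?_)
  exact ⟨m, Set.mem_smul_set_iff_inv_smul_mem.2 hm, rfl⟩

end ProperAction

section GroupAverage

variable {G M H : Type*} [Group G] [MeasurableSpace G] [MulAction G M]
  [NormedAddCommGroup H] [NormedSpace ℂ H] (μG : Measure G) (ρ : G →* (H ≃ₗᵢ[ℂ] H))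

noncomputable def groupAverage (s : M → H) (m : M) : H :=
  ∫ g, ρ g (s (g⁻¹ • m)) ∂μG

theorem groupAverage_smul [MeasurableMul G] [μG.IsMulLeftInvariant] [CompleteSpace H]
    (s : M → H) (g : G) (m : M) :
    groupAverage μG ρ s (g • m) = ρ g (groupAverage μG ρ s m) := by
  rw [groupAverage, groupAverage, ← integral_mul_left_eq_self _ g]
  simp only [mul_inv_rev, mul_smul, inv_smul_smul, map_mul]
  exact (ρ g).toLinearIsometry.integral_comp_comm _

end GroupAverage

section Average

variable {G M H : Type*} [Group G] [TopologicalSpace G] [IsTopologicalGroup G]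
  [TopologicalSpace M] [MulAction G M] [NormedAddCommGroup H] [InnerProductSpace ℂ H]
  {ρ : G →* (H ≃ₗᵢ[ℂ] H)} {s s₁ s₂ : M → H}

theorem continuous_inner_translate [ContinuousSMul G M]
    (hρ : Continuous fun p : G × H => ρ p.1 p.2) (hs₁ : Continuous s₁) (hs₂ : Continuous s₂) :
    Continuous (uncurry fun (g : G) m => inner ℂ (s₁ m) (ρ g (s₂ (g⁻¹ • m)))) := by
  fun_prop

theorem hasCompactSupport_inner_translate [ProperSMul G M]
    (hs₁' : HasCompactSupport s₁) (hs₂' : HasCompactSupport s₂) :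
    HasCompactSupport (uncurry fun (g : G) m => inner ℂ (s₁ m) (ρ g (s₂ (g⁻¹ • m)))) :=
  hasCompactSupport_uncurry_of_inv_smul_eq_zero hs₁' hs₂' fun g m h => by
    rcases h with h | h <;> simp [h]

variable [MeasurableSpace G] [BorelSpace G] (μG : Measure G) [IsFiniteMeasureOnCompacts μG]
  [ProperSMul G M]

theorem integrable_rep_apply_inv_smul (hρ : Continuous fun p : G × H => ρ p.1 p.2)
    (hs : Continuous s) (hs' : HasCompactSupport s) (m : M) :
    Integrable (fun g => ρ g (s (g⁻¹ • m))) μG :=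
  Continuous.integrable_of_hasCompactSupport (by fun_prop)
    (hasCompactSupport_of_inv_smul_eq_zero hs' m fun g h => by simp [h])

theorem continuous_groupAverage [LocallyCompactSpace M]
    (hρ : Continuous fun p : G × H => ρ p.1 p.2) (hs : Continuous s)
    (hs' : HasCompactSupport s) : Continuous (groupAverage μG ρ s) := by
  refine continuous_iff_continuousAt.2 fun m₀ => ?_
  obtain ⟨L, hL, hL_mem⟩ := exists_compact_mem_nhds m₀
  refine (continuousOn_integral_of_compact_support
    (ProperSMul.isCompact_setOfPred_inter_nonempty (G := G) hs' hL) (by fun_prop)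
    fun m g hm hg => ?_).continuousAt hL_mem
  rw [show s (g⁻¹ • m) = 0 from image_eq_zero_of_notMem_tsupport fun h =>
    hg ⟨m, Set.mem_smul_set_iff_inv_smul_mem.2 h, hm⟩, map_zero]

variable [CompleteSpace H]

theorem inner_groupAverage [μG.IsMulLeftInvariant] (hρ : Continuous fun p : G × H => ρ p.1 p.2)
    (hs₁ : Continuous s₁) (hs₁' : HasCompactSupport s₁) (m : M) :
    inner ℂ (groupAverage μG ρ s₁ m) (groupAverage μG ρ s₂ m)
      = ∫ g, inner ℂ (s₁ (g⁻¹ • m)) (groupAverage μG ρ s₂ (g⁻¹ • m)) ∂μG := by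
  set v := groupAverage μG ρ s₂ m
  calc inner ℂ (groupAverage μG ρ s₁ m) v
      = conj (∫ g, inner ℂ v (ρ g (s₁ (g⁻¹ • m))) ∂μG) := by
        rw [integral_inner (integrable_rep_apply_inv_smul μG hρ hs₁ hs₁' m), inner_conj_symm,
          groupAverage]
    _ = ∫ g, inner ℂ (ρ g (s₁ (g⁻¹ • m))) (ρ g (groupAverage μG ρ s₂ (g⁻¹ • m))) ∂μG := by
        rw [← integral_conj]
        simp only [inner_conj_symm, v, ← groupAverage_smul, smul_inv_smul]
    _ = _ := by simp only [LinearIsometryEquiv.inner_map_map]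

theorem integral_integral_inner_translate [MeasurableSpace M] [BorelSpace M]
    (μ : Measure M) [IsFiniteMeasureOnCompacts μ] (hρ : Continuous fun p : G × H => ρ p.1 p.2)
    (hs₁ : Continuous s₁) (hs₁' : HasCompactSupport s₁)
    (hs₂ : Continuous s₂) (hs₂' : HasCompactSupport s₂) :
    ∫ g, ∫ m, inner ℂ (s₁ m) (ρ g (s₂ (g⁻¹ • m))) ∂μ ∂μG
      = ∫ m, inner ℂ (s₁ m) (groupAverage μG ρ s₂ m) ∂μ := by
  rw [integral_integral_swap_of_hasCompactSupport (continuous_inner_translate hρ hs₁ hs₂)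
    (hasCompactSupport_inner_translate hs₁' hs₂')]
  congr 1 with m
  exact integral_inner (integrable_rep_apply_inv_smul μG hρ hs₂ hs₂' m) _

end Average

section Cutoff

variable {G M E : Type*} [Group G] [TopologicalSpace G] [IsTopologicalGroup G]
  [LocallyCompactSpace G] [MeasurableSpace G] [BorelSpace G]
  (μG : Measure G) [μG.IsHaarMeasure] [μG.IsMulRightInvariant]
  [TopologicalSpace M] [MulAction G M] [ProperSMul G M]
  {c : M → ℝ} (hc : Continuous c) (hc' : HasCompactSupport c)
  (hc_cutoff : ∀ m, ∫ g, c (g⁻¹ • m) ^ 2 ∂μG = 1)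

include hc hc' hc_cutoff

theorem integral_cutoff_smul_sq_eq_one (m : M) : ∫ g, c (g • m) ^ 2 ∂μG = 1 := by
  have h := integral_comp_inv_of_hasCompactSupport μG (f := fun g => c (g⁻¹ • m) ^ 2)
    (by fun_prop) (hasCompactSupport_of_inv_smul_eq_zero hc' m fun g h => by simp [h])
  simpa [hc_cutoff] using h

variable [MeasurableSpace M] [BorelSpace M] (μ : Measure M)
  [IsFiniteMeasureOnCompacts μ] [SMulInvariantMeasure G M μ]

theorem integral_cutoff_sq_smul_integral_inv_smul [NormedAddCommGroup E] [NormedSpace ℝ E]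
    [CompleteSpace E] {F : M → E} (hF : Continuous F) (hF' : HasCompactSupport F) :
    ∫ m, c m ^ 2 • ∫ g, F (g⁻¹ • m) ∂μG ∂μ = ∫ m, F m ∂μ := by
  calc ∫ m, c m ^ 2 • ∫ g, F (g⁻¹ • m) ∂μG ∂μ
      = ∫ m, ∫ g, c m ^ 2 • F (g⁻¹ • m) ∂μG ∂μ := by simp only [integral_smul]
    _ = ∫ g, ∫ m, c m ^ 2 • F (g⁻¹ • m) ∂μ ∂μG :=
        (integral_integral_swap_of_hasCompactSupport (by fun_prop)
          (hasCompactSupport_uncurry_of_inv_smul_eq_zero hc' hF' fun g m h => by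
            rcases h with h | h <;> simp [h])).symm
    _ = ∫ g, ∫ m, c (g • m) ^ 2 • F m ∂μ ∂μG := by
        congr 1 with g
        simpa using (integral_smul_eq_self (fun m => c m ^ 2 • F (g⁻¹ • m)) (μ := μ) (g := g)).symm
    _ = ∫ m, ∫ g, c (g • m) ^ 2 • F m ∂μG ∂μ :=
        integral_integral_swap_of_hasCompactSupport (by fun_prop)
          (hasCompactSupport_uncurry_of_smul_eq_zero hF' hc' fun g m h => by
            rcases h with h | h <;> simp [h])
    _ = ∫ m, F m ∂μ := by
        simp only [integral_smul_const, integral_cutoff_smul_sq_eq_one μG hc hc' hc_cutoff,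
          one_smul]

end Cutoff

theorem cutoff_pairing_of_averages_general
    {G : Type*} [Group G] [TopologicalSpace G] [IsTopologicalGroup G]
    [LocallyCompactSpace G] [MeasurableSpace G] [BorelSpace G]
    (μG : Measure G) [μG.IsHaarMeasure] [μG.IsMulRightInvariant]
    {M : Type*} [TopologicalSpace M] [LocallyCompactSpace M]
    [MulAction G M]
    [MeasurableSpace M] [BorelSpace M]
    (μ : Measure M) [μ.Regular] [SMulInvariantMeasure G M μ]
    {H : Type*} [NormedAddCommGroup H] [InnerProductSpace ℂ H] [CompleteSpace H]
    (ρ : G →* (H ≃ₗᵢ[ℂ] H)) (hρ : ∀ v : H, Continuous fun g : G => ρ g v)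
    (hproper : IsProperMap (fun p : G × M => (p.1 • p.2, p.2)))
    (c : M → ℝ) (hc_cont : Continuous c) (hc_supp : HasCompactSupport c)
    (hc_cutoff : ∀ m : M, ∫ g, (c (g⁻¹ • m)) ^ 2 ∂μG = 1)
    (s₁ s₂ : M → H)
    (h₁_cont : Continuous s₁) (h₁_supp : HasCompactSupport s₁)
    (h₂_cont : Continuous s₂) (h₂_supp : HasCompactSupport s₂) :
    Integrable (fun m : M => (c m : ℂ) ^ 2 *
        (inner ℂ (∫ g, ρ g (s₁ (g⁻¹ • m)) ∂μG) (∫ g, ρ g (s₂ (g⁻¹ • m)) ∂μG) : ℂ)) μ ∧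
    Integrable (fun g : G => ∫ m, (inner ℂ (s₁ m) (ρ g (s₂ (g⁻¹ • m))) : ℂ) ∂μ) μG ∧
    (∫ m, (c m : ℂ) ^ 2 *
        (inner ℂ (∫ g, ρ g (s₁ (g⁻¹ • m)) ∂μG) (∫ g, ρ g (s₂ (g⁻¹ • m)) ∂μG) : ℂ) ∂μ)
      = ∫ g, ∫ m, (inner ℂ (s₁ m) (ρ g (s₂ (g⁻¹ • m))) : ℂ) ∂μ ∂μG := by
  have : ProperSMul G M := ⟨hproper⟩
  have hρ' : Continuous fun p : G × H => ρ p.1 p.2 :=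
    continuous_uncurry_of_isometry (fun g => (ρ g).isometry) hρ
  have hΦ₁ := continuous_groupAverage μG hρ' h₁_cont h₁_supp
  have hΦ₂ := continuous_groupAverage μG hρ' h₂_cont h₂_supp
  have hF : HasCompactSupport fun m => inner ℂ (s₁ m) (groupAverage μG ρ s₂ m) :=
    h₁_supp.mono fun m hm h => hm (by simp [h])
  refine ⟨?_, integrable_integral_of_hasCompactSupport
    (continuous_inner_translate hρ' h₁_cont h₂_cont)
    (hasCompactSupport_inner_translate h₁_supp h₂_supp), ?_⟩
  · refine Continuous.integrable_of_hasCompactSupport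
      (((Complex.continuous_ofReal.comp hc_cont).pow 2).mul (hΦ₁.inner hΦ₂)) ?_
    exact (hc_supp.comp_left (g := fun x : ℝ => (x : ℂ) ^ 2) (by simp)).mul_right
  calc _ = ∫ m, c m ^ 2 •
          ∫ g, inner ℂ (s₁ (g⁻¹ • m)) (groupAverage μG ρ s₂ (g⁻¹ • m)) ∂μG ∂μ := by
        congr 1 with m
        rw [← inner_groupAverage μG hρ' h₁_cont h₁_supp, Complex.real_smul, Complex.ofReal_pow]
        rfl
    _ = ∫ m, inner ℂ (s₁ m) (groupAverage μG ρ s₂ m) ∂μ :=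
        integral_cutoff_sq_smul_integral_inv_smul μG hc_cont hc_supp hc_cutoff μ
          (h₁_cont.inner hΦ₂) hF
    _ = _ := (integral_integral_inner_translate μG μ hρ' h₁_cont h₁_supp h₂_cont h₂_supp).symm

/-- For a proper, cocompact action with cutoff function `c`, the `L²`-type pairing of
`G`-averages against `c²` equals the integral over `G` of the translated `L²` pairings. -/
theorem cutoff_pairing_of_averages
    {G : Type*} [Group G] [TopologicalSpace G] [IsTopologicalGroup G]
    [LocallyCompactSpace G] [T2Space G] [MeasurableSpace G] [BorelSpace G]
    (μG : Measure G) [μG.IsHaarMeasure] [μG.IsMulRightInvariant]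
    {M : Type*} [TopologicalSpace M] [LocallyCompactSpace M] [T2Space M]
    [MulAction G M] [ContinuousSMul G M]
    [MeasurableSpace M] [BorelSpace M]
    (μ : Measure M) [μ.Regular] [SMulInvariantMeasure G M μ]
    {H : Type*} [NormedAddCommGroup H] [InnerProductSpace ℂ H] [CompleteSpace H]
    (ρ : G →* (H ≃ₗᵢ[ℂ] H)) (hρ : ∀ v : H, Continuous fun g : G => ρ g v)
    (hproper : IsProperMap (fun p : G × M => (p.1 • p.2, p.2)))
    (hcocompact : ∃ K : Set M, IsCompact K ∧ ⋃ g : G, g • K = Set.univ)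
    (c : M → ℝ) (hc_cont : Continuous c) (hc_supp : HasCompactSupport c)
    (hc_range : ∀ m : M, c m ∈ Set.Icc (0 : ℝ) 1)
    (hc_cutoff : ∀ m : M, ∫ g, (c (g⁻¹ • m)) ^ 2 ∂μG = 1)
    (s₁ s₂ : M → H)
    (h₁_cont : Continuous s₁) (h₁_supp : HasCompactSupport s₁)
    (h₂_cont : Continuous s₂) (h₂_supp : HasCompactSupport s₂) :
    Integrable (fun m : M => (c m : ℂ) ^ 2 *
        (inner ℂ (∫ g, ρ g (s₁ (g⁻¹ • m)) ∂μG) (∫ g, ρ g (s₂ (g⁻¹ • m)) ∂μG) : ℂ)) μ ∧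
    Integrable (fun g : G => ∫ m, (inner ℂ (s₁ m) (ρ g (s₂ (g⁻¹ • m))) : ℂ) ∂μ) μG ∧
    (∫ m, (c m : ℂ) ^ 2 *
        (inner ℂ (∫ g, ρ g (s₁ (g⁻¹ • m)) ∂μG) (∫ g, ρ g (s₂ (g⁻¹ • m)) ∂μG) : ℂ) ∂μ)
      = ∫ g, ∫ m, (inner ℂ (s₁ m) (ρ g (s₂ (g⁻¹ • m))) : ℂ) ∂μ ∂μG :=
  cutoff_pairing_of_averages_general μG μ ρ hρ hproper c hc_cont hc_supp hc_cutoff s₁ s₂ h₁_cont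
    h₁_supp h₂_cont h₂_supp
end

section
/- Suppose the action of G on M is continuous, proper and cocompact. Then for every continuous compactly supported s : M → H, the integral ∫_G ⟨s, g·s⟩_{L²} dg is a nonnegative real number. -/
/-!
Let `T m = ∫ g, ρ g (s (g⁻¹ • m)) dg` be the average of the translates `g · s`. Left invariance
of `dg` makes `T` equivariant, and Fubini turns the integral into `∫ ⟪s m, T m⟫ dμ`.
Properness and cocompactness provide a cutoff function `c ≥ 0` with `∫ c (g • m) dg = 1` for
all `m` (an Urysohn function divided by its orbit integral, which is `G`-invariant by right
invariance of `dg`); inserting it, swapping the integrals and substituting `m ↦ g⁻¹ • m` rewrites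
`∫ ⟪s m, T m⟫ dμ` as `∫ c m ‖T m‖² dμ`, which is nonnegative.
-/

open MeasureTheory Pointwise ComplexConjugate

theorem LinearIsometryEquiv.continuous_uncurry_of_continuous_apply {X R E F : Type*}
    [TopologicalSpace X] [Semiring R] [SeminormedAddCommGroup E] [SeminormedAddCommGroup F]
    [Module R E] [Module R F] (f : X → E ≃ₗᵢ[R] F) (hf : ∀ v, Continuous fun x => f x v) :
    Continuous fun p : X × E => f p.1 p.2 :=
  continuous_prod_of_continuous_lipschitzWith' _ 1 (fun x => (f x).lipschitz) hf

theorem continuous_integral_of_locally_compact_support {X Y E : Type*}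
    [TopologicalSpace X] [WeaklyLocallyCompactSpace X]
    [TopologicalSpace Y] [MeasurableSpace Y] [OpensMeasurableSpace Y]
    {μ : Measure Y} [IsFiniteMeasureOnCompacts μ] [NormedAddCommGroup E] [NormedSpace ℝ E]
    {f : X → Y → E} (hf : Continuous (Function.uncurry f))
    (hsupp : ∀ V : Set X, IsCompact V → ∃ K : Set Y, IsCompact K ∧ ∀ x ∈ V, ∀ y ∉ K, f x y = 0) :
    Continuous fun x => ∫ y, f x y ∂μ := by
  refine continuous_iff_continuousAt.2 fun x₀ => ?_
  obtain ⟨V, hV, hVx₀⟩ := exists_compact_mem_nhds x₀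
  obtain ⟨K, hK, hfK⟩ := hsupp V hV
  exact (continuousOn_integral_of_compact_support hK hf.continuousOn
    fun x y hx hy => hfK x hx y hy).continuousAt hVx₀

theorem integral_comp_smul_smul {G M E : Type*} [Group G] [MeasurableSpace G] [MeasurableMul G]
    [MulAction G M] [NormedAddCommGroup E] [NormedSpace ℝ E] (μG : Measure G)
    [μG.IsMulRightInvariant] (f : M → E) (g₀ : G) (m : M) :
    ∫ g, f (g • g₀ • m) ∂μG = ∫ g, f (g • m) ∂μG := by
  simpa only [mul_smul] using integral_mul_right_eq_self (fun g => f (g • m)) g₀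

section ProperAction

variable {G M : Type*} [Group G] [TopologicalSpace G] [TopologicalSpace M] [MulAction G M]
  [ProperSMul G M]

theorem ProperSMul.isCompact_setOf_exists_smul_mem {A B : Set M} (hA : IsCompact A)
    (hB : IsCompact B) : IsCompact {g : G | ∃ a ∈ A, g • a ∈ B} := by
  convert ProperSMul.isCompact_setOfPred_inter_nonempty (G := G) hA hB using 2 with g
  simp [Set.Nonempty, Set.mem_smul_set]

theorem ProperSMul.hasCompactSupport_of_ne_zero [R1Space G] [R1Space M] {E : Type*} [Zero E]
    {F : G × M → E} {K A B : Set M} (hK : IsCompact K) (hA : IsCompact A) (hB : IsCompact B)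
    (hF : ∀ g m, F (g, m) ≠ 0 → m ∈ K ∧ ∃ a ∈ A, g • a ∈ B) : HasCompactSupport F :=
  .intro ((isCompact_setOf_exists_smul_mem hA hB).prod hK) fun p hp =>
    not_not.1 fun hne => hp ⟨(hF p.1 p.2 hne).2, (hF p.1 p.2 hne).1⟩

theorem HasCompactSupport.comp_smul_right [R1Space G] {E : Type*} [Zero E] {f : M → E}
    (hf : HasCompactSupport f) (m : M) : HasCompactSupport fun g : G => f (g • m) :=
  .intro (ProperSMul.isCompact_setOf_exists_smul_mem isCompact_singleton hf) fun _ hg =>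
    image_eq_zero_of_notMem_tsupport fun h => hg ⟨m, rfl, h⟩

theorem integral_comp_smul_pos [R1Space G] [MeasurableSpace G] [OpensMeasurableSpace G]
    (μG : Measure G) [μG.IsOpenPosMeasure] [IsFiniteMeasureOnCompacts μG] {c : M → ℝ}
    (hc : Continuous c) (hcs : HasCompactSupport c) (hc0 : ∀ m, 0 ≤ c m) {m : M}
    (hm : 0 < c m) : 0 < ∫ g, c (g • m) ∂μG := by
  have hcont : Continuous fun g : G => c (g • m) := by fun_prop
  refine (integral_pos_iff_support_of_nonneg (fun g => hc0 _)
    (hcont.integrable_of_hasCompactSupport (hcs.comp_smul_right m))).2 ?_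
  exact hcont.isOpen_support.measure_pos μG ⟨1, by simpa using hm.ne'⟩

end ProperAction

section Cutoff

variable {G M : Type*} [Group G] [TopologicalSpace G] [IsTopologicalGroup G] [MeasurableSpace G]
  [BorelSpace G] [TopologicalSpace M] [MulAction G M] [ProperSMul G M]

structure IsCutoff (μG : Measure G) (c : M → ℝ) : Prop where
  continuous : Continuous c
  hasCompactSupport : HasCompactSupport c
  nonneg : ∀ m, 0 ≤ c m
  integral_comp_smul : ∀ m, ∫ g, c (g • m) ∂μG = 1

theorem exists_isCutoff [LocallyCompactSpace M] [T2Space M] (μG : Measure G) [μG.IsHaarMeasure]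
    [μG.IsMulRightInvariant] (hcocompact : ∃ K : Set M, IsCompact K ∧ ⋃ g : G, g • K = Set.univ) :
    ∃ c : M → ℝ, IsCutoff μG c := by
  obtain ⟨K, hK, hKcov⟩ := hcocompact
  obtain ⟨c, hc1, -, hcs, hc01⟩ :=
    exists_continuous_one_zero_of_isCompact hK isClosed_empty (Set.disjoint_empty K)
  set h : M → ℝ := fun m => ∫ g, c (g • m) ∂μG
  have hh_smul : ∀ g₀ m, h (g₀ • m) = h m := integral_comp_smul_smul μG c
  have hh_pos : ∀ m, 0 < h m := by
    intro m
    have hm : m ∈ ⋃ g : G, g • K := by rw [hKcov]; trivial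
    obtain ⟨g₀, k, hk, rfl⟩ : ∃ g₀ : G, ∃ k ∈ K, g₀ • k = m := by
      simpa only [Set.mem_iUnion, Set.mem_smul_set] using hm
    rw [hh_smul]
    exact integral_comp_smul_pos μG c.continuous hcs (fun m => (hc01 m).1) (by simp [hc1 hk])
  have hh_cont : Continuous h :=
    continuous_integral_of_locally_compact_support (f := fun m g => c (g • m)) (by fun_prop)
      fun V hV => ⟨_, ProperSMul.isCompact_setOf_exists_smul_mem hV hcs,
        fun m hm g hg => image_eq_zero_of_notMem_tsupport fun h' => hg ⟨m, hm, h'⟩⟩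
  refine ⟨fun m => c m / h m, c.continuous.div hh_cont fun m => (hh_pos m).ne',
    hcs.mul_right, fun m => div_nonneg (hc01 m).1 (hh_pos m).le, fun m => ?_⟩
  simp_rw [hh_smul]
  rw [integral_div]
  exact div_self (hh_pos m).ne'

theorem IsCutoff.integral_eq_integral_smul_integral_comp_inv_smul [R1Space M] [MeasurableSpace M]
    [BorelSpace M] {μG : Measure G} [IsFiniteMeasureOnCompacts μG] {μ : Measure M}
    [IsFiniteMeasureOnCompacts μ] [SMulInvariantMeasure G M μ] {c : M → ℝ} (hc : IsCutoff μG c)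
    {E : Type*} [NormedAddCommGroup E] [NormedSpace ℝ E] [CompleteSpace E] {f : M → E}
    (hf : Continuous f) (hfs : HasCompactSupport f) :
    ∫ m, f m ∂μ = ∫ m, c m • ∫ g, f (g⁻¹ • m) ∂μG ∂μ := by
  have hc_cont := hc.continuous
  calc ∫ m, f m ∂μ = ∫ m, ∫ g, c (g • m) • f m ∂μG ∂μ := by
        simp_rw [integral_smul_const, hc.integral_comp_smul, one_smul]
    _ = ∫ g, ∫ m, c (g • m) • f m ∂μ ∂μG := by
        refine (integral_integral_swap_of_hasCompactSupport (by fun_prop) ?_).symm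
        refine ProperSMul.hasCompactSupport_of_ne_zero
          (F := fun p : G × M => c (p.1 • p.2) • f p.2)
          hfs hfs hc.hasCompactSupport fun g m hne => ?_
        have hm := subset_tsupport _ (right_ne_zero_of_smul hne)
        exact ⟨hm, m, hm, subset_tsupport _ (left_ne_zero_of_smul hne)⟩
    _ = ∫ g, ∫ m, c m • f (g⁻¹ • m) ∂μ ∂μG := by
        congr 1 with g
        simpa using (integral_smul_eq_self (fun m => c (g • m) • f m) (g := g⁻¹)).symm
    _ = ∫ m, ∫ g, c m • f (g⁻¹ • m) ∂μG ∂μ := by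
        refine integral_integral_swap_of_hasCompactSupport (by fun_prop) ?_
        refine ProperSMul.hasCompactSupport_of_ne_zero
          (F := fun p : G × M => c p.2 • f (p.1⁻¹ • p.2))
          hc.hasCompactSupport hfs hc.hasCompactSupport fun g m hne => ?_
        have hm := subset_tsupport _ (left_ne_zero_of_smul hne)
        exact ⟨hm, g⁻¹ • m, subset_tsupport _ (right_ne_zero_of_smul hne), by simpa using hm⟩
    _ = ∫ m, c m • ∫ g, f (g⁻¹ • m) ∂μG ∂μ := by
        simp_rw [integral_smul]

end Cutoff

section Average

variable {G M H : Type*} [Group G] [MulAction G M] [NormedAddCommGroup H] [InnerProductSpace ℂ H]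

noncomputable def sectionAverage [MeasurableSpace G] (μG : Measure G) (ρ : G →* (H ≃ₗᵢ[ℂ] H))
    (s : M → H) (m : M) : H :=
  ∫ g, ρ g (s (g⁻¹ • m)) ∂μG

theorem sectionAverage_smul [MeasurableSpace G] [MeasurableMul G] (μG : Measure G)
    [μG.IsMulLeftInvariant] (ρ : G →* (H ≃ₗᵢ[ℂ] H)) (s : M → H) (g₀ : G) (m : M) :
    sectionAverage μG ρ s (g₀ • m) = ρ g₀ (sectionAverage μG ρ s m) := by
  calc ∫ g, ρ g (s (g⁻¹ • g₀ • m)) ∂μG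
      = ∫ g, ρ (g₀ * g) (s ((g₀ * g)⁻¹ • g₀ • m)) ∂μG :=
        (integral_mul_left_eq_self (fun g => ρ g (s (g⁻¹ • g₀ • m))) g₀).symm
    _ = ∫ g, ρ g₀ (ρ g (s (g⁻¹ • m))) ∂μG := by simp [mul_smul]
    _ = ρ g₀ (sectionAverage μG ρ s m) :=
        (ρ g₀).toContinuousLinearEquiv.integral_comp_comm _

variable [TopologicalSpace G] [IsTopologicalGroup G] [TopologicalSpace M]
  {ρ : G →* (H ≃ₗᵢ[ℂ] H)} {s : M → H}

theorem continuous_apply_comp_inv_smul [ContinuousSMul G M] (hρ : ∀ v, Continuous fun g => ρ g v)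
    (hs : Continuous s) : Continuous fun p : G × M => ρ p.1 (s (p.1⁻¹ • p.2)) :=
  (LinearIsometryEquiv.continuous_uncurry_of_continuous_apply (fun g => ρ g) hρ).comp
    (continuous_fst.prodMk (hs.comp (continuous_fst.inv.smul continuous_snd)))

variable [MeasurableSpace G] variable [OpensMeasurableSpace G] [ProperSMul G M] (μG : Measure G) [IsFiniteMeasureOnCompacts μG]

theorem integrable_apply_comp_inv_smul (hρ : ∀ v, Continuous fun g => ρ g v) (hs : Continuous s)
    (hss : HasCompactSupport s) (m : M) : Integrable (fun g => ρ g (s (g⁻¹ • m))) μG := by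
  refine ((continuous_apply_comp_inv_smul hρ hs).comp
    (.prodMk_left m)).integrable_of_hasCompactSupport ?_
  refine ((hss.comp_smul_right m).comp_isClosedEmbedding
    (Homeomorph.inv G).isClosedEmbedding).mono fun g hg => ?_
  simpa using hg

theorem continuous_sectionAverage [WeaklyLocallyCompactSpace M]
    (hρ : ∀ v, Continuous fun g => ρ g v) (hs : Continuous s) (hss : HasCompactSupport s) :
    Continuous (sectionAverage μG ρ s) := by
  refine continuous_integral_of_locally_compact_support (f := fun m g => ρ g (s (g⁻¹ • m)))
    ((continuous_apply_comp_inv_smul hρ hs).comp continuous_swap) fun V hV =>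
      ⟨_, ProperSMul.isCompact_setOf_exists_smul_mem hss hV, fun m hm g hg => ?_⟩
  rw [image_eq_zero_of_notMem_tsupport fun h => hg ⟨_, h, by simpa using hm⟩, map_zero]

variable [CompleteSpace H]

theorem integral_integral_inner_eq_integral_inner_sectionAverage [R1Space M] [MeasurableSpace M]
    [OpensMeasurableSpace M] (μ : Measure M) [IsFiniteMeasureOnCompacts μ]
    (hρ : ∀ v, Continuous fun g => ρ g v) (hs : Continuous s) (hss : HasCompactSupport s) :
    ∫ g, ∫ m, inner ℂ (s m) (ρ g (s (g⁻¹ • m))) ∂μ ∂μG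
      = ∫ m, inner ℂ (s m) (sectionAverage μG ρ s m) ∂μ := by
  have hcont : Continuous fun p : G × M => inner ℂ (s p.2) (ρ p.1 (s (p.1⁻¹ • p.2))) :=
    (hs.comp continuous_snd).inner (continuous_apply_comp_inv_smul hρ hs)
  rw [integral_integral_swap_of_hasCompactSupport hcont ?_]
  · congr 1 with m
    exact integral_inner (integrable_apply_comp_inv_smul μG hρ hs hss m) (s m)
  refine ProperSMul.hasCompactSupport_of_ne_zero hss hss hss fun g m hne => ?_
  have hm : s m ≠ 0 := fun h => hne (by simp [h])
  have hgm : s (g⁻¹ • m) ≠ 0 := fun h => hne (by simp [h])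
  exact ⟨subset_tsupport _ hm, _, subset_tsupport _ hgm, by simpa using subset_tsupport _ hm⟩

theorem integral_inner_comp_inv_smul_sectionAverage [BorelSpace G] [μG.IsMulLeftInvariant]
    (hρ : ∀ v, Continuous fun g => ρ g v) (hs : Continuous s) (hss : HasCompactSupport s)
    (m : M) :
    ∫ g, inner ℂ (s (g⁻¹ • m)) (sectionAverage μG ρ s (g⁻¹ • m)) ∂μG
      = (‖sectionAverage μG ρ s m‖ ^ 2 : ℝ) := by
  calc ∫ g, inner ℂ (s (g⁻¹ • m)) (sectionAverage μG ρ s (g⁻¹ • m)) ∂μG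
      = ∫ g, conj (inner ℂ (sectionAverage μG ρ s m) (ρ g (s (g⁻¹ • m)))) ∂μG := by
        congr 1 with g
        rw [sectionAverage_smul, map_inv, inner_conj_symm, LinearIsometryEquiv.inner_map_eq_flip]
        rfl
    _ = conj (inner ℂ (sectionAverage μG ρ s m) (sectionAverage μG ρ s m)) := by
        rw [integral_conj, integral_inner (integrable_apply_comp_inv_smul μG hρ hs hss m)]
        rfl
    _ = (‖sectionAverage μG ρ s m‖ ^ 2 : ℝ) := by
        simp [inner_self_eq_norm_sq_to_K]

end Average

theorem integral_pairing_nonneg_general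
    {G : Type*} [Group G] [TopologicalSpace G] [IsTopologicalGroup G]
    [MeasurableSpace G] [BorelSpace G]
    (μG : Measure G) [μG.IsHaarMeasure] [μG.IsMulRightInvariant]
    {M : Type*} [TopologicalSpace M] [LocallyCompactSpace M] [T2Space M]
    [MulAction G M] [MeasurableSpace M] [BorelSpace M]
    (μ : Measure M) [μ.Regular] [SMulInvariantMeasure G M μ]
    {H : Type*} [NormedAddCommGroup H] [InnerProductSpace ℂ H] [CompleteSpace H]
    (ρ : G →* (H ≃ₗᵢ[ℂ] H)) (hρ : ∀ v : H, Continuous fun g : G => ρ g v)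
    (hproper : IsProperMap (fun p : G × M => (p.1 • p.2, p.2)))
    (hcocompact : ∃ K : Set M, IsCompact K ∧ ⋃ g : G, g • K = Set.univ)
    (s : M → H) (hs_cont : Continuous s) (hs_supp : HasCompactSupport s) :
    ∃ r : ℝ, 0 ≤ r ∧
      (∫ g, ∫ m, (inner ℂ (s m) (ρ g (s (g⁻¹ • m))) : ℂ) ∂μ ∂μG) = (r : ℂ) := by
  have : ProperSMul G M := ⟨hproper⟩
  obtain ⟨c, hc⟩ := exists_isCutoff μG hcocompact
  set T := sectionAverage μG ρ s
  have hT : Continuous T := continuous_sectionAverage μG hρ hs_cont hs_supp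
  refine ⟨∫ m, c m * ‖T m‖ ^ 2 ∂μ,
    integral_nonneg fun m => mul_nonneg (hc.nonneg m) (sq_nonneg _), ?_⟩
  calc ∫ g, ∫ m, inner ℂ (s m) (ρ g (s (g⁻¹ • m))) ∂μ ∂μG
      = ∫ m, inner ℂ (s m) (T m) ∂μ :=
        integral_integral_inner_eq_integral_inner_sectionAverage μG μ hρ hs_cont hs_supp
    _ = ∫ m, c m • ∫ g, inner ℂ (s (g⁻¹ • m)) (T (g⁻¹ • m)) ∂μG ∂μ :=
        hc.integral_eq_integral_smul_integral_comp_inv_smul (hs_cont.inner hT)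
          (hs_supp.mono fun m hm h => hm (by simp [h]))
    _ = ∫ m, ((c m * ‖T m‖ ^ 2 : ℝ) : ℂ) ∂μ := by
        congr 1 with m
        rw [integral_inner_comp_inv_smul_sectionAverage μG hρ hs_cont hs_supp, Complex.real_smul,
          Complex.ofReal_mul]
    _ = ((∫ m, c m * ‖T m‖ ^ 2 ∂μ : ℝ) : ℂ) := integral_ofReal

/-- For a proper cocompact action and a continuous compactly supported `H`-valued
function `s`, the integral `∫_G ⟨s, g·s⟩_{L²} dg` is a nonnegative real number. -/
theorem integral_pairing_nonneg
    {G : Type*} [Group G] [TopologicalSpace G] [IsTopologicalGroup G]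
    [LocallyCompactSpace G] [T2Space G] [MeasurableSpace G] [BorelSpace G]
    (μG : Measure G) [μG.IsHaarMeasure] [μG.IsMulRightInvariant]
    {M : Type*} [TopologicalSpace M] [LocallyCompactSpace M] [T2Space M]
    [MulAction G M] [ContinuousSMul G M]
    [MeasurableSpace M] [BorelSpace M]
    (μ : Measure M) [μ.Regular] [SMulInvariantMeasure G M μ]
    {H : Type*} [NormedAddCommGroup H] [InnerProductSpace ℂ H] [CompleteSpace H]
    (ρ : G →* (H ≃ₗᵢ[ℂ] H)) (hρ : ∀ v : H, Continuous fun g : G => ρ g v)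
    (hproper : IsProperMap (fun p : G × M => (p.1 • p.2, p.2)))
    (hcocompact : ∃ K : Set M, IsCompact K ∧ ⋃ g : G, g • K = Set.univ)
    (s : M → H) (hs_cont : Continuous s) (hs_supp : HasCompactSupport s) :
    ∃ r : ℝ, 0 ≤ r ∧
      (∫ g, ∫ m, (inner ℂ (s m) (ρ g (s (g⁻¹ • m))) : ℂ) ∂μ ∂μG) = (r : ℂ) :=
  integral_pairing_nonneg_general μG μ ρ hρ hproper hcocompact s hs_cont hs_supp
end

section
/- Suppose G acts continuously and properly on M. Let a : M → ℝ be a continuous G-invariant function, let K ⊆ M be compact, set Y := G•K, and suppose there is c > 0 such that a(x) ≥ c for all x ∈ M ∖ Y. Then there exist a continuous, nonnegative, G-invariant function f : M → ℝ whose support is contained in G•K′ for some compact K′ ⊆ M, and a constant r > 0, such that a(x) + f(x) ≥ r for every x ∈ M. -/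
/-!
Average a Urysohn bump `φ` for `K` over the group: `F x = ∫ φ (g⁻¹ • x) dg`. Properness makes the
integrand compactly supported in `g`, locally uniformly in `x`, so `F` is continuous; left
invariance of Haar measure makes `F` invariant, and `F > 0` on `K`, hence on `G • K` by
invariance. A large multiple of `F` then lifts `a` above `c` on the compact set `K`, hence on
`G • K`, while outside `G • K` the hypothesis already gives `a ≥ c`.
-/

open MeasureTheory Pointwise Set Function

namespace MulAction

variable {G M : Type*} [Group G] [MulAction G M] [MeasurableSpace G] (μ : Measure G)

noncomputable def orbitAverage (φ : M → ℝ) (x : M) : ℝ :=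
  ∫ g, φ (g⁻¹ • x) ∂μ

lemma orbitAverage_nonneg {φ : M → ℝ} (hφ : ∀ x, 0 ≤ φ x) (x : M) : 0 ≤ orbitAverage μ φ x :=
  integral_nonneg fun _ => hφ _

lemma orbitAverage_smul [MeasurableMul G] [μ.IsMulLeftInvariant] (φ : M → ℝ) (h : G) (x : M) :
    orbitAverage μ φ (h • x) = orbitAverage μ φ x := by
  simp only [orbitAverage]
  simpa [mul_smul] using integral_mul_left_eq_self (fun g : G => φ (g⁻¹ • x)) h⁻¹

variable [TopologicalSpace M]

omit [MeasurableSpace G] in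
lemma apply_inv_smul_eq_zero_of_notMem {φ : M → ℝ} {N : Set M} {x : M} (hx : x ∈ N)
    {g : G} (hg : g ∉ {g : G | (g • tsupport φ ∩ N).Nonempty}) : φ (g⁻¹ • x) = 0 := by
  by_contra h
  exact hg ⟨x, ⟨g⁻¹ • x, subset_tsupport φ h, smul_inv_smul g x⟩, hx⟩

lemma support_orbitAverage_subset (φ : M → ℝ) :
    support (orbitAverage μ φ) ⊆ ⋃ g : G, g • tsupport φ := by
  intro x hx
  obtain ⟨g, hg⟩ : ∃ g : G, φ (g⁻¹ • x) ≠ 0 := by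
    by_contra! h
    exact hx (by simp [orbitAverage, h])
  exact mem_iUnion.2 ⟨g, g⁻¹ • x, subset_tsupport φ hg, smul_inv_smul g x⟩

variable [TopologicalSpace G] [IsTopologicalGroup G] [ProperSMul G M]

omit [MeasurableSpace G] in
lemma hasCompactSupport_apply_inv_smul {φ : M → ℝ} (hφ : HasCompactSupport φ) (x : M) :
    HasCompactSupport fun g : G => φ (g⁻¹ • x) :=
  HasCompactSupport.intro (ProperSMul.isCompact_setOfPred_inter_nonempty hφ isCompact_singleton)
    fun _ hg => apply_inv_smul_eq_zero_of_notMem (mem_singleton x) hg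

variable [OpensMeasurableSpace G]

lemma orbitAverage_pos [μ.IsOpenPosMeasure] [IsFiniteMeasureOnCompacts μ] {φ : M → ℝ}
    (hφ : Continuous φ) (hφc : HasCompactSupport φ) (hφ₀ : ∀ x, 0 ≤ φ x) {x : M}
    (hx : 0 < φ x) : 0 < orbitAverage μ φ x := by
  have hcont : Continuous fun g : G => φ (g⁻¹ • x) := by fun_prop
  refine (integral_pos_iff_support_of_nonneg (fun _ => hφ₀ _)
    (hcont.integrable_of_hasCompactSupport (hasCompactSupport_apply_inv_smul hφc x))).2 ?_
  exact (isOpen_compl_singleton.preimage hcont).measure_pos μ ⟨1, by simpa using hx.ne'⟩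

lemma continuous_orbitAverage [IsFiniteMeasureOnCompacts μ] [WeaklyLocallyCompactSpace M]
    {φ : M → ℝ} (hφ : Continuous φ) (hφc : HasCompactSupport φ) :
    Continuous (orbitAverage μ φ) := by
  refine continuous_iff_continuousAt.2 fun x₀ => ?_
  obtain ⟨N, hN, hNx₀⟩ := exists_compact_mem_nhds x₀
  refine (continuousOn_integral_of_compact_support
    (ProperSMul.isCompact_setOfPred_inter_nonempty (G := G) hφc hN) ?_
    fun x _ hx hg => apply_inv_smul_eq_zero_of_notMem hx hg).continuousAt hNx₀
  exact (by fun_prop : Continuous fun p : M × G => φ (p.2⁻¹ • p.1)).continuousOn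

end MulAction

open MulAction

lemma exists_invariant_cocompactlySupported_pos_on {G M : Type*} [Group G] [TopologicalSpace G]
    [IsTopologicalGroup G] [MeasurableSpace G] [BorelSpace G] (μ : Measure G) [μ.IsHaarMeasure]
    [TopologicalSpace M] [LocallyCompactSpace M] [T2Space M] [MulAction G M] [ProperSMul G M]
    {K : Set M} (hK : IsCompact K) :
    ∃ F : M → ℝ, Continuous F ∧ (∀ x, 0 ≤ F x) ∧ (∀ (g : G) x, F (g • x) = F x) ∧
      (∃ K' : Set M, IsCompact K' ∧ support F ⊆ ⋃ g : G, g • K') ∧ ∀ x ∈ K, 0 < F x := by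
  obtain ⟨φ, hφK, -, hφc, hφ01⟩ :=
    exists_continuous_one_zero_of_isCompact hK isClosed_empty (disjoint_empty K)
  have hφ₀ : ∀ x, 0 ≤ φ x := fun x => (hφ01 x).1
  exact ⟨orbitAverage μ φ, continuous_orbitAverage μ φ.continuous hφc, orbitAverage_nonneg μ hφ₀,
    orbitAverage_smul μ φ, ⟨tsupport φ, hφc, support_orbitAverage_subset μ φ⟩,
    fun x hx => orbitAverage_pos μ φ.continuous hφc hφ₀ (by simp [hφK hx])⟩

lemma exists_le_add_mul_of_pos_on_compact {G M : Type*} [Group G] [MulAction G M]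
    [TopologicalSpace M] {K : Set M} (hK : IsCompact K) {a F : M → ℝ} (ha : ContinuousOn a K)
    (hF : ContinuousOn F K) (ha_inv : ∀ (g : G) x, a (g • x) = a x)
    (hF_inv : ∀ (g : G) x, F (g • x) = F x) (hF_nonneg : ∀ x, 0 ≤ F x)
    (hF_pos : ∀ x ∈ K, 0 < F x) {c : ℝ} (hbound : ∀ x, x ∉ ⋃ g : G, g • K → c ≤ a x) :
    ∃ t : ℝ, 0 ≤ t ∧ ∀ x, c ≤ a x + t * F x := by
  obtain ⟨B, hB⟩ := hK.bddAbove_image <|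
    (continuousOn_const.sub ha).div hF fun x hx => (hF_pos x hx).ne'
  refine ⟨max B 0, le_max_right B 0, fun x => ?_⟩
  by_cases hx : x ∈ ⋃ g : G, g • K
  · obtain ⟨g, k, hk, rfl⟩ := mem_iUnion.1 hx
    have hck : (c - a k) / F k ≤ B := hB (mem_image_of_mem _ hk)
    rw [div_le_iff₀ (hF_pos k hk)] at hck
    rw [ha_inv, hF_inv]
    nlinarith [le_max_left B 0, hF_pos k hk]
  · nlinarith [hbound x hx, le_max_right B 0, hF_nonneg x]

theorem exists_invariant_bump_of_pos_outside_cocompact_general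
    {G : Type*} [Group G] [TopologicalSpace G] [IsTopologicalGroup G]
    [MeasurableSpace G] [BorelSpace G]
    (μG : Measure G) [μG.IsHaarMeasure]
    {M : Type*} [TopologicalSpace M] [LocallyCompactSpace M] [T2Space M]
    [MulAction G M]
    (hproper : IsProperMap (fun p : G × M => (p.1 • p.2, p.2)))
    (a : M → ℝ) (ha_cont : Continuous a)
    (ha_inv : ∀ (g : G) (m : M), a (g • m) = a m)
    (K : Set M) (hK : IsCompact K)
    (c : ℝ) (hc : 0 < c)
    (hbound : ∀ x : M, x ∉ (⋃ g : G, g • K) → c ≤ a x) :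
    ∃ f : M → ℝ, Continuous f ∧ (∀ x : M, 0 ≤ f x) ∧
      (∀ (g : G) (x : M), f (g • x) = f x) ∧
      (∃ K' : Set M, IsCompact K' ∧ Function.support f ⊆ ⋃ g : G, g • K') ∧
      ∃ r : ℝ, 0 < r ∧ ∀ x : M, r ≤ a x + f x := by
  have : ProperSMul G M := ⟨hproper⟩
  obtain ⟨F, hF_cont, hF_nonneg, hF_inv, ⟨K', hK', hF_supp⟩, hF_pos⟩ :=
    exists_invariant_cocompactlySupported_pos_on μG hK
  obtain ⟨t, ht, hle⟩ := exists_le_add_mul_of_pos_on_compact hK ha_cont.continuousOn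
    hF_cont.continuousOn ha_inv hF_inv hF_nonneg hF_pos hbound
  refine ⟨fun x => t * F x, continuous_const.mul hF_cont, fun x => mul_nonneg ht (hF_nonneg x),
    fun g x => congrArg (t * ·) (hF_inv g x),
    ⟨K', hK', (support_mul_subset_right _ _).trans hF_supp⟩, c, hc, hle⟩

/-- A continuous `G`-invariant function that is bounded below by `c > 0` outside a
cocompact set can be made uniformly positive by adding a continuous, nonnegative,
`G`-invariant, cocompactly supported bump function. -/
theorem exists_invariant_bump_of_pos_outside_cocompact
    {G : Type*} [Group G] [TopologicalSpace G] [IsTopologicalGroup G]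
    [LocallyCompactSpace G] [T2Space G] [MeasurableSpace G] [BorelSpace G]
    (μG : Measure G) [μG.IsHaarMeasure] [μG.IsMulRightInvariant]
    {M : Type*} [TopologicalSpace M] [LocallyCompactSpace M] [T2Space M]
    [MulAction G M] [ContinuousSMul G M]
    (hproper : IsProperMap (fun p : G × M => (p.1 • p.2, p.2)))
    (a : M → ℝ) (ha_cont : Continuous a)
    (ha_inv : ∀ (g : G) (m : M), a (g • m) = a m)
    (K : Set M) (hK : IsCompact K)
    (c : ℝ) (hc : 0 < c)
    (hbound : ∀ x : M, x ∉ (⋃ g : G, g • K) → c ≤ a x) :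
    ∃ f : M → ℝ, Continuous f ∧ (∀ x : M, 0 ≤ f x) ∧
      (∀ (g : G) (x : M), f (g • x) = f x) ∧
      (∃ K' : Set M, IsCompact K' ∧ Function.support f ⊆ ⋃ g : G, g • K') ∧
      ∃ r : ℝ, 0 < r ∧ ∀ x : M, r ≤ a x + f x :=
  exists_invariant_bump_of_pos_outside_cocompact_general μG hproper a ha_cont ha_inv K hK c hc
    hbound
end

section
/- Let b : ℝ → ℝ be defined by b(x) = −1 for x ≤ −1, b(x) = x for −1 ≤ x ≤ 1, and b(x) = 1 for x ≥ 1, and for each s > 0 let b_s : ℝ → ℝ be b_s(x) = x / (|x|^{1/s} + 1)^s. Then for every s > 0 and every x ∈ ℝ one has |b_s(x) − b(x)| ≤ 1 − 2^{−s}; consequently sup_{x ∈ ℝ} |b_s(x) − b(x)| tends to 0 as s tends to 0 from the right. -/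
open Filter Set

private lemma bs_aux (s : ℝ) (hs : 0 < s) (y : ℝ) (hy : 1 ≤ y) :
    (2:ℝ) ^ (-s) ≤ y / (y ^ (1/s) + 1) ^ s ∧ y / (y ^ (1/s) + 1) ^ s ≤ 1 := by
  have hy0 : (0:ℝ) ≤ y := le_trans zero_le_one hy
  have h1 : (1:ℝ) ≤ y ^ (1/s) := Real.one_le_rpow hy (by positivity)
  have hbase : (0:ℝ) < y ^ (1/s) + 1 := by linarith
  have hA : (0:ℝ) < (y ^ (1/s) + 1) ^ s := Real.rpow_pos_of_pos hbase s
  have hys : (y ^ (1/s)) ^ s = y := by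
    rw [← Real.rpow_mul hy0, one_div, inv_mul_cancel₀ hs.ne', Real.rpow_one]
  have hupper : y ≤ (y ^ (1/s) + 1) ^ s := by
    calc y = (y ^ (1/s)) ^ s := hys.symm
    _ ≤ (y ^ (1/s) + 1) ^ s :=
      Real.rpow_le_rpow (by positivity) (by linarith) hs.le
  have hlower : (y ^ (1/s) + 1) ^ s ≤ 2 ^ s * y := by
    have h2 : (2:ℝ) ^ s * y = (2 * y ^ (1/s)) ^ s := by
      rw [Real.mul_rpow (by norm_num) (by positivity), hys]
    rw [h2]
    exact Real.rpow_le_rpow hbase.le (by linarith) hs.le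
  have h2s : (0:ℝ) < 2 ^ s := Real.rpow_pos_of_pos two_pos s
  constructor
  · rw [Real.rpow_neg (by norm_num : (0:ℝ) ≤ 2), ← one_div,
      div_le_div_iff₀ h2s hA]
    nlinarith
  · rw [div_le_one hA]; exact hupper

private lemma bs_pointwise (b : ℝ → ℝ)
    (hb₁ : ∀ x : ℝ, x ≤ -1 → b x = -1)
    (hb₂ : ∀ x : ℝ, -1 ≤ x → x ≤ 1 → b x = x)
    (hb₃ : ∀ x : ℝ, 1 ≤ x → b x = 1) :
    ∀ s : ℝ, 0 < s → ∀ x : ℝ,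
      |x / (|x| ^ (1 / s) + 1) ^ s - b x| ≤ 1 - 2 ^ (-s) := by
  intro s hs x
  have h2s : (0:ℝ) < 2 ^ s := Real.rpow_pos_of_pos two_pos s
  have h2neg : (2:ℝ) ^ (-s) = 1 / 2 ^ s := by
    rw [Real.rpow_neg (by norm_num : (0:ℝ) ≤ 2), one_div]
  have h2le1 : (2:ℝ) ^ (-s) ≤ 1 := by
    rw [h2neg, div_le_one h2s]
    exact Real.one_le_rpow one_le_two hs.le
  rcases le_or_gt 1 x with hx | hx
  · -- x ≥ 1
    rw [hb₃ x hx, abs_of_nonneg (by linarith : (0:ℝ) ≤ x)]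
    obtain ⟨hlo, hhi⟩ := bs_aux s hs x hx
    rw [abs_of_nonpos (by linarith)]
    linarith
  rcases le_or_gt x (-1) with hx' | hx'
  · -- x ≤ -1
    rw [hb₁ x hx', abs_of_nonpos (by linarith : x ≤ 0)]
    obtain ⟨hlo, hhi⟩ := bs_aux s hs (-x) (by linarith)
    set A := ((-x) ^ (1/s) + 1) ^ s with hAdef
    have hx2 : x / A = -((-x)/A) := by ring
    rw [hx2, show -((-x)/A) - (-1) = 1 - (-x)/A from by ring,
      abs_of_nonneg (by linarith)]
    linarith
  · -- -1 < x < 1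
    have hx1 : -1 ≤ x := hx'.le
    have hx2 : x ≤ 1 := hx.le
    rw [hb₂ x hx1 hx2]
    have habs1 : |x| ≤ 1 := abs_le.mpr ⟨hx1, hx2⟩
    have h1 : |x| ^ (1/s) ≤ 1 :=
      Real.rpow_le_one (abs_nonneg x) habs1 (by positivity)
    have hbase : (0:ℝ) < |x| ^ (1/s) + 1 := by positivity
    have hA : (0:ℝ) < (|x| ^ (1/s) + 1) ^ s := Real.rpow_pos_of_pos hbase s
    have hA1 : (1:ℝ) ≤ (|x| ^ (1/s) + 1) ^ s :=
      Real.one_le_rpow (by linarith [Real.rpow_nonneg (abs_nonneg x) (1/s)]) hs.le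
    have hA2s : (|x| ^ (1/s) + 1) ^ s ≤ 2 ^ s :=
      Real.rpow_le_rpow hbase.le (by linarith) hs.le
    set A := (|x| ^ (1/s) + 1) ^ s with hAdef
    have key : x / A - x = x * (1/A - 1) := by ring
    rw [key, abs_mul]
    have hinv : 1/A ≤ 1 := by rw [div_le_one hA]; exact hA1
    have hinv2 : (2:ℝ) ^ (-s) ≤ 1/A := by
      rw [h2neg]
      exact one_div_le_one_div_of_le hA hA2s
    have habs2 : |1/A - 1| = 1 - 1/A := by
      rw [abs_of_nonpos (by linarith)]; ring
    rw [habs2]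
    calc |x| * (1 - 1/A) ≤ 1 * (1 - 2 ^ (-s)) :=
          mul_le_mul habs1 (by linarith) (by linarith) zero_le_one
    _ = 1 - 2 ^ (-s) := one_mul _

/-- The functions `b_s(x) = x / (|x|^{1/s} + 1)^s` approximate the clamping function
`b` uniformly: `|b_s(x) − b(x)| ≤ 1 − 2^{−s}`, so `sup_x |b_s(x) − b(x)| → 0` as
`s → 0⁺`. -/
theorem bs_approx_clamp (b : ℝ → ℝ)
    (hb₁ : ∀ x : ℝ, x ≤ -1 → b x = -1)
    (hb₂ : ∀ x : ℝ, -1 ≤ x → x ≤ 1 → b x = x)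
    (hb₃ : ∀ x : ℝ, 1 ≤ x → b x = 1) :
    (∀ s : ℝ, 0 < s → ∀ x : ℝ,
      |x / (|x| ^ (1 / s) + 1) ^ s - b x| ≤ 1 - 2 ^ (-s)) ∧
    Tendsto (fun s : ℝ => ⨆ x : ℝ, |x / (|x| ^ (1 / s) + 1) ^ s - b x|)
      (nhdsWithin 0 (Ioi 0)) (nhds 0) := by
  have hpt := bs_pointwise b hb₁ hb₂ hb₃
  refine ⟨hpt, ?_⟩
  have hb0 : b 0 = 0 := hb₂ 0 (by norm_num) (by norm_num)
  have hub : ∀ s ∈ Ioi (0:ℝ),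
      (⨆ x : ℝ, |x / (|x| ^ (1 / s) + 1) ^ s - b x|) ≤ 1 - 2 ^ (-s) :=
    fun s hs => ciSup_le (hpt s hs)
  have hlb : ∀ s ∈ Ioi (0:ℝ),
      (0:ℝ) ≤ ⨆ x : ℝ, |x / (|x| ^ (1 / s) + 1) ^ s - b x| := by
    intro s hs
    have hbdd : BddAbove (range fun x : ℝ => |x / (|x| ^ (1 / s) + 1) ^ s - b x|) :=
      ⟨1 - 2 ^ (-s), by rintro _ ⟨x, rfl⟩; exact hpt s hs x⟩
    have h0 : |(0:ℝ) / (|(0:ℝ)| ^ (1 / s) + 1) ^ s - b 0| = 0 := by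
      rw [hb0, zero_div, sub_zero, abs_zero]
    calc (0:ℝ) = |(0:ℝ) / (|(0:ℝ)| ^ (1 / s) + 1) ^ s - b 0| := h0.symm
    _ ≤ _ := le_ciSup hbdd 0
  have htend : Tendsto (fun s : ℝ => 1 - (2:ℝ) ^ (-s))
      (nhdsWithin 0 (Ioi 0)) (nhds 0) := by
    have hc : ContinuousAt (fun s : ℝ => 1 - (2:ℝ) ^ (-s)) 0 := by
      have : ContinuousAt (fun s : ℝ => (2:ℝ) ^ (-s)) 0 :=
        (Real.continuousAt_const_rpow (by norm_num : (2:ℝ) ≠ 0)).comp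
          (continuous_neg.continuousAt)
      exact continuousAt_const.sub this
    have := hc.tendsto.mono_left (nhdsWithin_le_nhds (s := Ioi (0:ℝ)))
    simpa using this
  exact tendsto_of_tendsto_of_tendsto_of_le_of_le' tendsto_const_nhds htend
    (eventually_nhdsWithin_of_forall hlb) (eventually_nhdsWithin_of_forall hub)
end

section
/- Let G be a finite-dimensional Lie group with a left Haar measure dg, acting smoothly and properly on a finite-dimensional smooth manifold M without boundary (the action map G × M → M is smooth, and (g,m) ↦ (g•m, m) is a proper map). Let s : M → ℂ be a smooth, compactly supported function. Then Φ(s)(m) := ∫_G s(g⁻¹•m) dg is well defined (for each m the integrand is compactly supported in g), the function Φ(s) is smooth on M, and Φ(s) is G-invariant: Φ(s)(h•m) = Φ(s)(m) for all h ∈ G and m ∈ M. -/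
/-!
Properness of the action makes `g ↦ s (g⁻¹ • m)` vanish outside a compact set of `G` that can be
chosen uniformly for `m` in a compact neighbourhood of any point. In a chart, `Φ(s)` is then the
integral of a jointly smooth integrand with uniformly compact support. Such an integral can be
differentiated under the integral sign, the integrand being dominated by a constant on a
finite-measure set containing the support, and the derivative is an integral of the same kind
(with the partial derivative as integrand), so induction on the order gives smoothness.
Invariance is the left invariance of the Haar measure.
-/

open MeasureTheory Manifold Set Filter Topology Function

theorem exists_bound_nhds_of_continuousOn_of_compact_support {X Y E : Type*}
    [TopologicalSpace X] [TopologicalSpace Y] [NormedAddCommGroup E]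
    {f : X → Y → E} {U : Set X} {k : Set Y} (hU : IsOpen U) (hk : IsCompact k)
    (hf : ContinuousOn (uncurry f) (U ×ˢ univ)) (hfk : ∀ x y, x ∈ U → y ∉ k → f x y = 0)
    {x₀ : X} (hx₀ : x₀ ∈ U) :
    ∃ C, ∀ᶠ x in 𝓝 x₀, ∀ y, ‖f x y‖ ≤ C := by
  have hcont : ∀ y, ContinuousAt (uncurry f) (x₀, y) := fun y =>
    hf.continuousAt ((hU.prod isOpen_univ).mem_nhds ⟨hx₀, trivial⟩)
  obtain ⟨C, hC⟩ := hk.exists_bound_of_continuousOn fun y _ =>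
    ((hcont y).comp (Continuous.prodMk_right x₀).continuousAt).continuousWithinAt
  have hnear : ∀ᶠ x in 𝓝 x₀, ∀ y ∈ k, ‖f x y‖ < max C 0 + 1 :=
    hk.eventually_forall_of_forall_eventually fun y hy => (hcont y).norm.eventually
      (gt_mem_nhds (((hC y hy).trans (le_max_left C 0)).trans_lt (lt_add_one _)))
  refine ⟨max C 0 + 1, (hnear.and (hU.mem_nhds hx₀)).mono fun x ⟨hxk, hxU⟩ y => ?_⟩
  by_cases hy : y ∈ k
  · exact (hxk y hy).le
  · rw [hfk x y hxU hy, norm_zero]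
    positivity

theorem integrable_indicator_toMeasurable_const {Y : Type*} [TopologicalSpace Y]
    [MeasurableSpace Y] {μ : Measure Y} [IsFiniteMeasureOnCompacts μ] {k : Set Y}
    (hk : IsCompact k) (C : ℝ) :
    Integrable ((toMeasurable μ k).indicator fun _ => C) μ := by
  rw [integrable_indicator_iff (measurableSet_toMeasurable μ k)]
  exact integrableOn_const (by rw [measure_toMeasurable]; exact hk.measure_ne_top)

theorem norm_le_indicator_toMeasurable {Y E : Type*} [MeasurableSpace Y] {μ : Measure Y}
    [NormedAddCommGroup E] {f : Y → E} {k : Set Y} {C : ℝ}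
    (hfk : ∀ y ∉ k, f y = 0) (hC : ∀ y, ‖f y‖ ≤ C) (y : Y) :
    ‖f y‖ ≤ (toMeasurable μ k).indicator (fun _ => C) y := by
  by_cases hy : y ∈ k
  · rw [indicator_of_mem (subset_toMeasurable μ k hy)]
    exact hC y
  · rw [hfk y hy, norm_zero]
    exact indicator_nonneg (fun _ _ => (norm_nonneg _).trans (hC y)) y

theorem fderiv_param_eq_zero_of_forall_eq_zero {P Y E : Type*} [NormedAddCommGroup P]
    [NormedSpace ℝ P] [NormedAddCommGroup E] [NormedSpace ℝ E]
    {F : P → Y → E} {U : Set P} {k : Set Y} (hU : IsOpen U)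
    (hFk : ∀ p y, p ∈ U → y ∉ k → F p y = 0) :
    ∀ p y, p ∈ U → y ∉ k → fderiv ℝ (F · y) p = 0 := fun p y hp hy => by
  have hzero : (F · y) =ᶠ[𝓝 p] fun _ => 0 :=
    eventually_of_mem (hU.mem_nhds hp) fun q hq => hFk q y hq hy
  rw [hzero.fderiv_eq, fderiv_const_apply]

section ParametricIntegral

variable {Y E : Type*} [TopologicalSpace Y] [MeasurableSpace Y] [OpensMeasurableSpace Y]
  {μ : Measure Y} [NormedAddCommGroup E]

theorem aestronglyMeasurable_of_continuousOn_of_compact_support {X : Type*} [TopologicalSpace X]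
    {f : X → Y → E} {U : Set X} {k : Set Y} (hk : IsCompact k)
    (hf : ContinuousOn (uncurry f) (U ×ˢ univ)) (hfk : ∀ x y, x ∈ U → y ∉ k → f x y = 0)
    {x : X} (hx : x ∈ U) : AEStronglyMeasurable (f x) μ :=
  ((hf.comp_continuous (.prodMk_right x) fun _ => ⟨hx, trivial⟩)
    |>.stronglyMeasurable_of_support_subset_isCompact hk
      (support_subset_iff'.2 (hfk x · hx))).aestronglyMeasurable

theorem hasFDerivAt_integral_of_compact_support [NormedSpace ℝ E] [IsFiniteMeasureOnCompacts μ]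
    {P : Type*} [NormedAddCommGroup P] [NormedSpace ℝ P]
    {F : P → Y → E} {U : Set P} {k : Set Y}
    (hU : IsOpen U) (hk : IsCompact k) (hFk : ∀ p y, p ∈ U → y ∉ k → F p y = 0)
    (hF : ContinuousOn (uncurry F) (U ×ˢ univ))
    (hdiff : ∀ p ∈ U, ∀ y, DifferentiableAt ℝ (F · y) p)
    (hF' : ContinuousOn (uncurry fun p y => fderiv ℝ (F · y) p) (U ×ˢ univ))
    {p₀ : P} (hp₀ : p₀ ∈ U) :
    HasFDerivAt (fun p => ∫ y, F p y ∂μ) (∫ y, fderiv ℝ (F · y) p₀ ∂μ) p₀ := by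
  have hF'k := fderiv_param_eq_zero_of_forall_eq_zero hU hFk
  obtain ⟨C₀, hC₀⟩ := exists_bound_nhds_of_continuousOn_of_compact_support hU hk hF hFk hp₀
  obtain ⟨C, hC⟩ := exists_bound_nhds_of_continuousOn_of_compact_support hU hk hF' hF'k hp₀
  refine hasFDerivAt_integral_of_dominated_of_fderiv_le (hC.and (hU.mem_nhds hp₀))
    (eventually_of_mem (hU.mem_nhds hp₀) fun p hp =>
      aestronglyMeasurable_of_continuousOn_of_compact_support hk hF hFk hp)
    ((integrable_indicator_toMeasurable_const hk C₀).mono'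
      (aestronglyMeasurable_of_continuousOn_of_compact_support hk hF hFk hp₀)
      (ae_of_all _ (norm_le_indicator_toMeasurable (hFk p₀ · hp₀) hC₀.self_of_nhds)))
    (aestronglyMeasurable_of_continuousOn_of_compact_support hk hF' hF'k hp₀)
    (ae_of_all _ fun y p hp => norm_le_indicator_toMeasurable (hF'k p · hp.2) hp.1 y)
    (integrable_indicator_toMeasurable_const hk C)
    (ae_of_all _ fun y p hp => (hdiff p hp.2 y).hasFDerivAt)

end ParametricIntegral

section SmoothParametricIntegral

variable {EG HG : Type*} [NormedAddCommGroup EG] [NormedSpace ℝ EG] [TopologicalSpace HG]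
  {I : ModelWithCorners ℝ EG HG} {G : Type*} [TopologicalSpace G] [ChartedSpace HG G]

theorem ContMDiffOn.contMDiffOn_fderiv_param [IsManifold I 1 G]
    {P E : Type*} [NormedAddCommGroup P] [NormedSpace ℝ P] [NormedAddCommGroup E] [NormedSpace ℝ E]
    {F : P → G → E} {U : Set P} (hU : IsOpen U) {m n : WithTop ℕ∞} (hmn : m + 1 ≤ n)
    (hF : ContMDiffOn (𝓘(ℝ, P).prod I) 𝓘(ℝ, E) n (uncurry F) (U ×ˢ univ)) :
    ContMDiffOn (𝓘(ℝ, P).prod I) 𝓘(ℝ, P →L[ℝ] E) m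
      (uncurry fun p y => fderiv ℝ (F · y) p) (U ×ˢ univ) := by
  rintro ⟨p, y⟩ hq
  have hFq : ContMDiffAt (𝓘(ℝ, P).prod I) 𝓘(ℝ, E) n (uncurry F) (p, y) :=
    hF.contMDiffAt ((hU.prod isOpen_univ).mem_nhds hq)
  have key := ContMDiffAt.mfderiv (fun q : P × G => fun p' : P => F p' q.2) Prod.fst
    (hFq.comp ((p, y), p) (contMDiffAt_snd.prodMk (contMDiffAt_snd.comp _ contMDiffAt_fst)))
    contMDiffAt_fst hmn
  simp only [inTangentCoordinates_model_space, mfderiv_eq_fderiv] at key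
  exact key.contMDiffWithinAt

theorem ContMDiffOn.differentiableAt_param
    {P E : Type*} [NormedAddCommGroup P] [NormedSpace ℝ P] [NormedAddCommGroup E] [NormedSpace ℝ E]
    {F : P → G → E} {U : Set P} (hU : IsOpen U) {n : WithTop ℕ∞} (hn : n ≠ 0)
    (hF : ContMDiffOn (𝓘(ℝ, P).prod I) 𝓘(ℝ, E) n (uncurry F) (U ×ˢ univ))
    {p : P} (hp : p ∈ U) (y : G) : DifferentiableAt ℝ (F · y) p :=
  ((hF.contMDiffAt ((hU.prod isOpen_univ).mem_nhds ⟨hp, trivial⟩)).comp p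
    (contMDiffAt_id.prodMk contMDiffAt_const)).mdifferentiableAt hn |>.differentiableAt

variable [IsManifold I 1 G] [MeasurableSpace G] [OpensMeasurableSpace G]
  {μ : Measure G} [IsFiniteMeasureOnCompacts μ]

universe uP uE

/- The values live in a universe containing that of `P`, because the induction replaces `E` by
`P →L[ℝ] E`. -/
theorem contDiffOn_integral_of_compact_support_aux {P : Type uP} [NormedAddCommGroup P]
    [NormedSpace ℝ P] {E : Type max uP uE} [NormedAddCommGroup E] [NormedSpace ℝ E]
    {F : P → G → E} {U : Set P} {k : Set G} {n : ℕ∞} (hU : IsOpen U) (hk : IsCompact k)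
    (hFk : ∀ p y, p ∈ U → y ∉ k → F p y = 0)
    (hF : ContMDiffOn (𝓘(ℝ, P).prod I) 𝓘(ℝ, E) n (uncurry F) (U ×ˢ univ)) :
    ContDiffOn ℝ n (fun p => ∫ y, F p y ∂μ) U := by
  induction n using ENat.nat_induction generalizing E with
  | zero =>
    rw [WithTop.coe_zero, contDiffOn_zero] at *
    exact continuousOn_integral_of_compact_support hk hF.continuousOn hFk
  | succ n ih =>
    simp only [Nat.succ_eq_add_one, Nat.cast_add, Nat.cast_one, WithTop.coe_add,
      WithTop.coe_natCast, WithTop.coe_one] at hF ⊢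
    have hderiv : ∀ p ∈ U,
        HasFDerivAt (fun p => ∫ y, F p y ∂μ) (∫ y, fderiv ℝ (F · y) p ∂μ) p :=
      fun p hp => hasFDerivAt_integral_of_compact_support hU hk hFk hF.continuousOn
        (fun p hp => hF.differentiableAt_param hU (by simp) hp)
        (hF.contMDiffOn_fderiv_param hU le_rfl).continuousOn hp
    rw [contDiffOn_succ_iff_fderiv_of_isOpen hU]
    refine ⟨fun p hp => (hderiv p hp).differentiableAt.differentiableWithinAt, by simp, ?_⟩
    exact (ih (fderiv_param_eq_zero_of_forall_eq_zero hU hFk)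
      (hF.contMDiffOn_fderiv_param hU le_rfl)).congr fun p hp => (hderiv p hp).fderiv
  | top ih =>
    rw [contDiffOn_infty]
    rw [contMDiffOn_infty] at hF
    exact fun n => ih n hFk (hF n)

theorem contDiffOn_integral_of_compact_support {P : Type uP} [NormedAddCommGroup P]
    [NormedSpace ℝ P] {E : Type uE} [NormedAddCommGroup E] [NormedSpace ℝ E]
    {F : P → G → E} {U : Set P} {k : Set G} {n : ℕ∞} (hU : IsOpen U) (hk : IsCompact k)
    (hFk : ∀ p y, p ∈ U → y ∉ k → F p y = 0)
    (hF : ContMDiffOn (𝓘(ℝ, P).prod I) 𝓘(ℝ, E) n (uncurry F) (U ×ˢ univ)) :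
    ContDiffOn ℝ n (fun p => ∫ y, F p y ∂μ) U := by
  let e : ULift.{uP} E ≃L[ℝ] E := ContinuousLinearEquiv.ulift
  have hlift := contDiffOn_integral_of_compact_support_aux (μ := μ)
    (F := fun p y => e.symm (F p y)) hU hk (fun p y hp hy => by rw [hFk p y hp hy, map_zero])
    (e.symm.contDiff.contMDiff.comp_contMDiffOn hF)
  have hcomp : (fun p => ∫ y, F p y ∂μ) = e ∘ fun p => ∫ y, e.symm (F p y) ∂μ := by
    ext p
    simp [e.symm.integral_comp_comm]
  rw [hcomp]
  exact e.contDiff.comp_contDiffOn hlift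

theorem contMDiffOn_integral_of_compact_support {EM : Type*} [NormedAddCommGroup EM]
    [NormedSpace ℝ EM] {M : Type*} [TopologicalSpace M] [ChartedSpace EM M] {n : ℕ∞}
    [IsManifold 𝓘(ℝ, EM) n M] {E : Type*} [NormedAddCommGroup E] [NormedSpace ℝ E]
    {F : M → G → E} {W : Set M} {k : Set G} (hW : IsOpen W) (hk : IsCompact k)
    (hFk : ∀ m y, m ∈ W → y ∉ k → F m y = 0)
    (hF : ContMDiffOn (𝓘(ℝ, EM).prod I) 𝓘(ℝ, E) n (uncurry F) (W ×ˢ univ)) :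
    ContMDiffOn 𝓘(ℝ, EM) 𝓘(ℝ, E) n (fun m => ∫ y, F m y ∂μ) W := by
  intro m₀ hm₀
  refine ContMDiffAt.contMDiffWithinAt (contMDiffAt_iff_source.2 ?_)
  set c := chartAt EM m₀
  have hU : IsOpen (c.target ∩ c.symm ⁻¹' W) := c.isOpen_inter_preimage_symm hW
  have hchart : ContMDiffOn (𝓘(ℝ, EM).prod I) (𝓘(ℝ, EM).prod I) n (Prod.map c.symm id)
      ((c.target ∩ c.symm ⁻¹' W) ×ˢ univ) :=
    (contMDiffOn_chart_symm.mono inter_subset_left).prodMap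
      (contMDiffOn_id (I := I) (M := G) (s := univ))
  have hint := contDiffOn_integral_of_compact_support (μ := μ) hU hk
    (fun x y hx hy => hFk _ y hx.2 hy) (hF.comp hchart fun q hq => ⟨hq.1.2, trivial⟩)
  have hm₀U : c m₀ ∈ c.target ∩ c.symm ⁻¹' W :=
    ⟨c.map_source (mem_chart_source EM m₀), by simpa [c.left_inv (mem_chart_source EM m₀)]⟩
  simpa [comp_def] using (hint.contDiffAt (hU.mem_nhds hm₀U)).contMDiffAt.contMDiffWithinAt

end SmoothParametricIntegral

theorem HasCompactSupport.exists_isCompact_inv_smul_eq_zero {G X β : Type*} [Group G]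
    [MulAction G X] [TopologicalSpace G] [TopologicalSpace X] [ProperSMul G X] [Zero β]
    {s : X → β} (hs : HasCompactSupport s) {L : Set X} (hL : IsCompact L) :
    ∃ k : Set G, IsCompact k ∧ ∀ x g, x ∈ L → g ∉ k → s (g⁻¹ • x) = 0 := by
  refine ⟨_, ProperSMul.isCompact_setOfPred_inter_nonempty hs hL, fun x g hx hg => ?_⟩
  by_contra hne
  exact hg ⟨x, ⟨g⁻¹ • x, subset_tsupport s hne, smul_inv_smul g x⟩, hx⟩

theorem integral_inv_smul_smul {G X E : Type*} [Group G] [MeasurableSpace G] [MeasurableMul G]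
    [MulAction G X] [NormedAddCommGroup E] [NormedSpace ℝ E] (μ : Measure G)
    [μ.IsMulLeftInvariant] (f : X → E) (h : G) (x : X) :
    ∫ g, f (g⁻¹ • h • x) ∂μ = ∫ g, f (g⁻¹ • x) ∂μ := by
  simpa [mul_smul] using integral_mul_left_eq_self (μ := μ) (fun g => f (g⁻¹ • x)) h⁻¹

theorem average_smooth_invariant_general
    {EG : Type*} [NormedAddCommGroup EG] [NormedSpace ℝ EG]
    {G : Type*} [TopologicalSpace G] [ChartedSpace EG G] [Group G]
    [LieGroup (𝓘(ℝ, EG)) (⊤ : ℕ∞) G]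
    [MeasurableSpace G] [BorelSpace G]
    (μG : Measure G) [μG.IsHaarMeasure]
    {EM : Type*} [NormedAddCommGroup EM] [NormedSpace ℝ EM] [FiniteDimensional ℝ EM]
    {M : Type*} [TopologicalSpace M] [ChartedSpace EM M]
    [IsManifold (𝓘(ℝ, EM)) (⊤ : ℕ∞) M]
    [MulAction G M]
    (hsmooth : ContMDiff ((𝓘(ℝ, EG)).prod (𝓘(ℝ, EM))) (𝓘(ℝ, EM)) (⊤ : ℕ∞)
      (fun p : G × M => p.1 • p.2))
    (hproper : IsProperMap (fun p : G × M => (p.1 • p.2, p.2)))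
    (s : M → ℂ) (hs_smooth : ContMDiff (𝓘(ℝ, EM)) (𝓘(ℝ, ℂ)) (⊤ : ℕ∞) s)
    (hs_supp : HasCompactSupport s) :
    (∀ m : M, HasCompactSupport (fun g : G => s (g⁻¹ • m))) ∧
    ContMDiff (𝓘(ℝ, EM)) (𝓘(ℝ, ℂ)) (⊤ : ℕ∞) (fun m : M => ∫ g, s (g⁻¹ • m) ∂μG) ∧
    (∀ (h : G) (m : M), (∫ g, s (g⁻¹ • h • m) ∂μG) = ∫ g, s (g⁻¹ • m) ∂μG) := by
  have : ProperSMul G M := ⟨hproper⟩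
  have : IsTopologicalGroup G := topologicalGroup_of_lieGroup 𝓘(ℝ, EG) ((⊤ : ℕ∞) : WithTop ℕ∞)
  have : T1Space G := ChartedSpace.t1Space EG G
  have : LocallyCompactSpace M := ChartedSpace.locallyCompactSpace EM M
  have hF : ContMDiff (𝓘(ℝ, EM).prod 𝓘(ℝ, EG)) 𝓘(ℝ, ℂ) (⊤ : ℕ∞)
      (uncurry fun m (g : G) => s (g⁻¹ • m)) :=
    hs_smooth.comp (hsmooth.comp (((contMDiff_inv 𝓘(ℝ, EG) _).comp contMDiff_snd).prodMk
      contMDiff_fst))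
  refine ⟨fun m => ?_, fun m₀ => ?_, integral_inv_smul_smul μG s⟩
  · obtain ⟨k, hk, hsk⟩ := hs_supp.exists_isCompact_inv_smul_eq_zero (G := G) isCompact_singleton
    exact HasCompactSupport.intro hk fun g hg => hsk m g rfl hg
  · obtain ⟨L, hL, hLm₀⟩ := exists_compact_mem_nhds m₀
    obtain ⟨k, hk, hsk⟩ := hs_supp.exists_isCompact_inv_smul_eq_zero (G := G) hL
    exact (contMDiffOn_integral_of_compact_support isOpen_interior hk
      (fun m g hm hg => hsk m g (interior_subset hm) hg) hF.contMDiffOn).contMDiffAt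
      (interior_mem_nhds.2 hLm₀)

/-- For a smooth, proper action of a Lie group `G` on a smooth manifold `M` and a smooth
compactly supported `s : M → ℂ`, the average `Φ(s)(m) = ∫_G s(g⁻¹ • m) dg` is well defined
(the integrand is compactly supported in `g`), smooth, and `G`-invariant. -/
theorem average_smooth_invariant
    {EG : Type*} [NormedAddCommGroup EG] [NormedSpace ℝ EG] [FiniteDimensional ℝ EG]
    {G : Type*} [TopologicalSpace G] [ChartedSpace EG G] [Group G]
    [LieGroup (𝓘(ℝ, EG)) (⊤ : ℕ∞) G]
    [MeasurableSpace G] [BorelSpace G]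
    (μG : Measure G) [μG.IsHaarMeasure]
    {EM : Type*} [NormedAddCommGroup EM] [NormedSpace ℝ EM] [FiniteDimensional ℝ EM]
    {M : Type*} [TopologicalSpace M] [ChartedSpace EM M]
    [IsManifold (𝓘(ℝ, EM)) (⊤ : ℕ∞) M]
    [MulAction G M]
    (hsmooth : ContMDiff ((𝓘(ℝ, EG)).prod (𝓘(ℝ, EM))) (𝓘(ℝ, EM)) (⊤ : ℕ∞)
      (fun p : G × M => p.1 • p.2))
    (hproper : IsProperMap (fun p : G × M => (p.1 • p.2, p.2)))
    (s : M → ℂ) (hs_smooth : ContMDiff (𝓘(ℝ, EM)) (𝓘(ℝ, ℂ)) (⊤ : ℕ∞) s)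
    (hs_supp : HasCompactSupport s) :
    (∀ m : M, HasCompactSupport (fun g : G => s (g⁻¹ • m))) ∧
    ContMDiff (𝓘(ℝ, EM)) (𝓘(ℝ, ℂ)) (⊤ : ℕ∞) (fun m : M => ∫ g, s (g⁻¹ • m) ∂μG) ∧
    (∀ (h : G) (m : M), (∫ g, s (g⁻¹ • h • m) ∂μG) = ∫ g, s (g⁻¹ • m) ∂μG) :=
  average_smooth_invariant_general μG hsmooth hproper s hs_smooth hs_supp
end
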